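/- arXiv:math/0511682 — 4 statements merged into one kernel-verified Lean document; each statement's English description precedes it below -/
import Mathlib

section
/- Let θ be an irrational number in (0,1) with continued fraction expansion [0; a_1, a_2, ...] and convergents p_n/q_n. Then for any non-negative integer n and any integer r with 1 ≤ r ≤ q_{n+1} - 1, one has ⌊(q_n + r)θ⌋ = p_n + ⌊rθ⌋. -/
/-- The Gauss-map iterates of `θ`: `cfTheta θ 0 = θ` and
`cfTheta θ (n+1) = {1 / cfTheta θ n}` (fractional part), so that
`θ = [0; a₁, a₂, ...]` with `aₙ = ⌊1 / cfTheta θ (n-1)⌋`. -/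
noncomputable def cfTheta (θ : ℝ) : ℕ → ℝ
  | 0 => θ
  | n + 1 => Int.fract (1 / cfTheta θ n)

/-- The `n`-th partial quotient `aₙ` (for `n ≥ 1`) of the continued fraction
expansion `θ = [0; a₁, a₂, ...]` of `θ ∈ (0,1)`. -/
noncomputable def cfA (θ : ℝ) (n : ℕ) : ℤ := ⌊1 / cfTheta θ (n - 1)⌋

/-- Numerators `pₙ` of the convergents of `θ = [0; a₁, a₂, ...]`:
`p₋₁ = 1`, `p₀ = 0`, `p_{n+1} = a_{n+1} pₙ + p_{n-1}`. -/
noncomputable def cfP (θ : ℝ) : ℕ → ℤ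
  | 0 => 0
  | 1 => 1
  | n + 2 => cfA θ (n + 2) * cfP θ (n + 1) + cfP θ n

/-- Denominators `qₙ` of the convergents of `θ = [0; a₁, a₂, ...]`:
`q₋₁ = 0`, `q₀ = 1`, `q_{n+1} = a_{n+1} qₙ + q_{n-1}`. -/
noncomputable def cfQ (θ : ℝ) : ℕ → ℤ
  | 0 => 1
  | 1 => cfA θ 1
  | n + 2 => cfA θ (n + 2) * cfQ θ (n + 1) + cfQ θ n

/-!
Put `e = qₙθ - pₙ`. Since `(qₙ + r)θ = pₙ + e + rθ`, the claim is that `e + {rθ} ∈ [0, 1)`.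
Consecutive convergents satisfy `p_{n+1}qₙ - pₙq_{n+1} = ±1`, and their errors `qₙθ - pₙ`
and `q_{n+1}θ - p_{n+1}` have opposite signs (the second is `-θ_{n+1}` times the first).
Unimodularity writes any `(r, s)` as `x (qₙ, pₙ) + y (q_{n+1}, p_{n+1})` with integers
`x, y`; for `0 < r < q_{n+1}` and `r ≠ qₙ` either `y = 0, x ≥ 2` or `xy < 0`, and in both
cases `|rθ - s| > |e|`. Taking `s = ⌊rθ⌋` and `s = ⌊rθ⌋ + 1` gives
`|e| < min({rθ}, 1 - {rθ})`. For `r = qₙ` one uses instead `q_{n+1}|e| < 1`, so `|e| < 1/2`.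
-/

section FloorRing

variable {K : Type*} [Field K] [LinearOrder K] [IsStrictOrderedRing K] [FloorRing K]

theorem Int.floor_add_eq_floor_of_add_fract_mem_Ico {e a : K}
    (h : e + Int.fract a ∈ Set.Ico 0 1) : ⌊e + a⌋ = ⌊a⌋ := by
  rw [Int.floor_eq_iff]
  have := Int.floor_add_fract a
  constructor <;> linarith [h.1, h.2]

theorem add_fract_mem_Ico_of_abs_lt_half {e : K} (h : |e| < 1 / 2) :
    e + Int.fract e ∈ Set.Ico 0 1 := by
  obtain ⟨h₁, h₂⟩ := abs_lt.1 h
  rcases le_or_gt 0 e with he | he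
  · rw [Int.fract_eq_self.2 ⟨he, by linarith⟩]
    constructor <;> linarith
  · have : ⌊e⌋ = -1 := by rw [Int.floor_eq_iff]; push_cast; constructor <;> linarith
    rw [Int.fract, this]
    push_cast
    constructor <;> linarith

variable {θ : K} {p q p' q' : ℤ}

theorem exists_mul_add_mul_eq_of_isUnit (hdet : IsUnit (p' * q - p * q')) (r s : ℤ) :
    ∃ x y : ℤ, x * q + y * q' = r ∧ x * p + y * p' = s := by
  have hd := Int.isUnit_mul_self hdet
  set d := p' * q - p * q'
  refine ⟨d * (r * p' - s * q'), d * (s * q - r * p), ?_, ?_⟩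
  · linear_combination r * hd
  · linear_combination s * hd

theorem mul_abs_sub_lt_one_of_isUnit (hdet : IsUnit (p' * q - p * q'))
    (hsign : (q * θ - p) * (q' * θ - p') < 0) (hq : 0 < q) :
    q' * |q * θ - p| < 1 := by
  have hd : ((p' * q - p * q' : ℤ) : K) = 1 ∨ ((p' * q - p * q' : ℤ) : K) = -1 := by
    rcases Int.isUnit_iff.1 hdet with h | h <;> simp [h]
  have hq' : (0 : K) < q := by exact_mod_cast hq
  push_cast at hd
  rcases lt_or_gt_of_ne (left_ne_zero_of_mul hsign.ne) with he | he
  · rw [abs_of_neg he]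
    have : 0 < q' * θ - p' := by nlinarith
    rcases hd with hd | hd <;> nlinarith
  · rw [abs_of_pos he]
    have : q' * θ - p' < 0 := by nlinarith
    rcases hd with hd | hd <;> nlinarith

theorem abs_sub_lt_abs_sub_of_isUnit (hdet : IsUnit (p' * q - p * q'))
    (hsign : (q * θ - p) * (q' * θ - p') < 0) (hq : 0 < q) {r : ℤ} (hr : 0 < r)
    (hrq' : r < q') (hrq : r ≠ q) (s : ℤ) : |q * θ - p| < |r * θ - s| := by
  obtain ⟨x, y, hr_eq, hs_eq⟩ := exists_mul_add_mul_eq_of_isUnit hdet r s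
  have hxy : (y = 0 ∧ 2 ≤ x) ∨ x * y < 0 := by
    rcases eq_or_ne y 0 with rfl | hy
    · have : x ≠ 1 := by rintro rfl; exact hrq (by linarith)
      have : 0 < x := by nlinarith
      omega
    · have hx : x ≠ 0 := by
        rintro rfl; rcases lt_or_gt_of_ne hy with hy' | hy' <;> nlinarith
      refine .inr (lt_of_le_of_ne (not_lt.1 fun h ↦ ?_) (mul_ne_zero hx hy))
      rcases pos_and_pos_or_neg_and_neg_of_mul_pos h with ⟨hx', hy'⟩ | ⟨hx', hy'⟩ <;> nlinarith
  have hdecomp : (r * θ - s : K) = x * (q * θ - p) + y * (q' * θ - p') := by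
    rw [← hr_eq, ← hs_eq]; push_cast; ring
  rw [← sq_lt_sq, hdecomp]
  set e := (q : K) * θ - p
  set e' := (q' : K) * θ - p'
  have he : 0 < e ^ 2 := by positivity [left_ne_zero_of_mul hsign.ne]
  rcases hxy with ⟨rfl, hx⟩ | hxy
  · have hx : (4 : K) ≤ x ^ 2 := by
      have : (2 : K) ≤ x := by exact_mod_cast hx
      nlinarith
    simp only [Int.cast_zero, zero_mul, add_zero, mul_pow]
    nlinarith [mul_le_mul_of_nonneg_right hx he.le]
  · have hx : (1 : K) ≤ x ^ 2 :=
      mod_cast (one_le_sq_iff_one_le_abs _).2 (Int.one_le_abs (left_ne_zero_of_mul hxy.ne))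
    have hxy' : (x * y : K) < 0 := by exact_mod_cast hxy
    -- the cross term `2xy·ee'` of `(xe + ye')²` is positive
    nlinarith [mul_pos_of_neg_of_neg hxy' hsign, sq_nonneg (y * e'),
      mul_le_mul_of_nonneg_right hx he.le]

theorem floor_add_mul_eq_of_isUnit (hdet : IsUnit (p' * q - p * q'))
    (hsign : (q * θ - p) * (q' * θ - p') < 0) (hq : 0 < q) {r : ℤ} (hr : 0 < r)
    (hrq' : r < q') : ⌊((q + r : ℤ) : K) * θ⌋ = p + ⌊(r : K) * θ⌋ := by
  set e := (q : K) * θ - p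
  have hsplit : ((q + r : ℤ) : K) * θ = p + (e + r * θ) := by push_cast; ring
  rw [hsplit, Int.floor_intCast_add, Int.floor_add_eq_floor_of_add_fract_mem_Ico]
  rcases eq_or_ne r q with rfl | hrq
  · rw [show (r : K) * θ = p + e by ring, Int.fract_intCast_add]
    apply add_fract_mem_Ico_of_abs_lt_half
    have hq' : (2 : K) ≤ q' := by exact_mod_cast (by omega : 2 ≤ q')
    nlinarith [mul_abs_sub_lt_one_of_isUnit hdet hsign hq, abs_nonneg e]
  · have h₁ : |e| < Int.fract ((r : K) * θ) := by
      have := abs_sub_lt_abs_sub_of_isUnit hdet hsign hq hr hrq' hrq ⌊(r : K) * θ⌋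
      rwa [Int.self_sub_floor, abs_of_nonneg (Int.fract_nonneg ((r : K) * θ))] at this
    have h₂ : |e| < 1 - Int.fract ((r : K) * θ) := by
      have := abs_sub_lt_abs_sub_of_isUnit hdet hsign hq hr hrq' hrq (⌊(r : K) * θ⌋ + 1)
      rwa [Int.cast_add, Int.cast_one, ← sub_sub, Int.self_sub_floor, abs_sub_comm _ (1 : K),
        abs_of_pos (sub_pos.2 (Int.fract_lt_one ((r : K) * θ)))] at this
    constructor <;> linarith [neg_abs_le e, le_abs_self e]

end FloorRing

section ContinuedFraction

variable {θ : ℝ}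

theorem cfTheta_succ (n : ℕ) : cfTheta θ (n + 1) = 1 / cfTheta θ n - cfA θ (n + 1) := rfl

theorem Irrational.cfTheta (hθ : Irrational θ) (n : ℕ) : Irrational (cfTheta θ n) := by
  induction n with
  | zero => exact hθ
  | succ n ih => rw [cfTheta_succ, one_div]; exact ih.inv.sub_intCast _

theorem cfTheta_mem_Ioo (hθ : Irrational θ) (hθ01 : θ ∈ Set.Ioo 0 1) :
    ∀ n, cfTheta θ n ∈ Set.Ioo 0 1
  | 0 => hθ01
  | n + 1 => ⟨(Int.fract_nonneg _).lt_of_ne' (hθ.cfTheta (n + 1)).ne_zero, Int.fract_lt_one _⟩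

theorem one_le_cfA (hθ : Irrational θ) (hθ01 : θ ∈ Set.Ioo 0 1) (n : ℕ) :
    1 ≤ cfA θ (n + 1) := by
  obtain ⟨h₀, h₁⟩ := cfTheta_mem_Ioo hθ hθ01 n
  exact Int.le_floor.2 (by exact_mod_cast one_le_one_div h₀ h₁.le)

theorem cfQ_pos (hθ : Irrational θ) (hθ01 : θ ∈ Set.Ioo 0 1) (n : ℕ) : 0 < cfQ θ n := by
  induction n using Nat.twoStepInduction with
  | zero => exact one_pos
  | one => exact one_le_cfA hθ hθ01 0
  | more n ih₀ ih₁ =>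
    have := one_le_cfA hθ hθ01 (n + 1)
    rw [cfQ]; nlinarith

theorem cfP_succ_mul_cfQ_sub_cfP_mul_cfQ_succ (n : ℕ) :
    cfP θ (n + 1) * cfQ θ n - cfP θ n * cfQ θ (n + 1) = (-1) ^ n := by
  induction n with
  | zero => simp [cfP, cfQ]
  | succ n ih =>
    rw [cfP, cfQ]
    linear_combination -ih

theorem cfQ_succ_mul_sub_cfP_succ (hθ : Irrational θ) (hθ01 : θ ∈ Set.Ioo 0 1) (n : ℕ) :
    cfQ θ (n + 1) * θ - cfP θ (n + 1) = -cfTheta θ (n + 1) * (cfQ θ n * θ - cfP θ n) := by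
  induction n with
  | zero =>
    have : θ ≠ 0 := hθ01.1.ne'
    rw [cfTheta_succ]
    simp only [cfQ, cfP, cfTheta]
    field_simp
    ring
  | succ n ih =>
    have ht : cfTheta θ (n + 1) ≠ 0 := (cfTheta_mem_Ioo hθ hθ01 (n + 1)).1.ne'
    rw [cfQ, cfP, cfTheta_succ (n + 1)]
    push_cast
    field_simp
    linear_combination ih

theorem cfQ_mul_sub_cfP_mul_succ_neg (hθ : Irrational θ) (hθ01 : θ ∈ Set.Ioo 0 1) (n : ℕ) :
    (cfQ θ n * θ - cfP θ n) * (cfQ θ (n + 1) * θ - cfP θ (n + 1)) < 0 := by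
  have he : (cfQ θ n : ℝ) * θ - cfP θ n ≠ 0 :=
    ((hθ.intCast_mul (cfQ_pos hθ hθ01 n).ne').sub_intCast _).ne_zero
  have ht := (cfTheta_mem_Ioo hθ hθ01 (n + 1)).1
  rw [cfQ_succ_mul_sub_cfP_succ hθ hθ01]
  nlinarith [sq_pos_of_ne_zero he]

end ContinuedFraction

/-- For `θ ∈ (0,1)` irrational with convergents `pₙ/qₙ`, any `n ≥ 0` and any
integer `r` with `1 ≤ r ≤ q_{n+1} - 1`, one has `⌊(qₙ + r)θ⌋ = pₙ + ⌊rθ⌋`. -/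
theorem floor_qn_add (θ : ℝ) (hθ : Irrational θ) (hθ01 : θ ∈ Set.Ioo (0:ℝ) 1)
    (n : ℕ) (r : ℤ) (hr1 : 1 ≤ r) (hr2 : r ≤ cfQ θ (n + 1) - 1) :
    ⌊((cfQ θ n + r : ℤ) : ℝ) * θ⌋ = cfP θ n + ⌊(r : ℝ) * θ⌋ := by
  have hdet : IsUnit (cfP θ (n + 1) * cfQ θ n - cfP θ n * cfQ θ (n + 1)) := by
    rw [cfP_succ_mul_cfQ_sub_cfP_mul_cfQ_succ]
    exact isUnit_neg_one.pow n
  exact floor_add_mul_eq_of_isUnit hdet (cfQ_mul_sub_cfP_mul_succ_neg hθ hθ01 n)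
    (cfQ_pos hθ hθ01 n) hr1 (by omega)
end

section
/- Let θ be an irrational number in (0,1), let k ≥ 2 be an integer, and define d_n = 1 + (⌊nθ⌋ mod k) for every n ≥ 1. Then the sequence (d_n)_{n≥1} is not eventually periodic. -/
/-- Let `θ ∈ (0,1)` be irrational, `k ≥ 2` an integer, and
`dₙ = 1 + (⌊nθ⌋ mod k)`. Then `(dₙ)_{n ≥ 1}` is not eventually periodic. -/
theorem davison_seq_not_eventually_periodic (θ : ℝ) (hθ : Irrational θ)
    (hθ01 : θ ∈ Set.Ioo (0:ℝ) 1) (k : ℕ) (hk : 2 ≤ k)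
    (d : ℕ → ℤ) (hd : ∀ n : ℕ, 1 ≤ n → d n = 1 + ⌊(n : ℝ) * θ⌋ % (k : ℤ)) :
    ¬ ∃ (N T : ℕ), 0 < T ∧ ∀ n : ℕ, N ≤ n → 1 ≤ n → d (n + T) = d n := by
  rintro ⟨N, T, hT, hper⟩
  set a : ℤ := ⌊(T : ℝ) * θ⌋ with ha
  set M : ℕ := max N 1 with hM
  have hk1 : (1 : ℤ) < (k : ℤ) := by exact_mod_cast hk.trans_lt' one_lt_two
  -- divisibility of the floor differences
  have hdiv : ∀ n : ℕ, M ≤ n → (k : ℤ) ∣ (⌊((n + T : ℕ) : ℝ) * θ⌋ - ⌊(n : ℝ) * θ⌋) := by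
    intro n hn
    have hn1 : 1 ≤ n := le_trans (le_max_right N 1) hn
    have hN : N ≤ n := le_trans (le_max_left N 1) hn
    have h3 := hper n hN hn1
    rw [hd n hn1, hd (n + T) (by omega)] at h3
    have hmod : ⌊(n : ℝ) * θ⌋ % (k : ℤ) = ⌊((n + T : ℕ) : ℝ) * θ⌋ % (k : ℤ) := by omega
    exact Int.ModEq.dvd hmod
  -- the floor difference is a or a+1
  have hrange : ∀ n : ℕ, ⌊((n + T : ℕ) : ℝ) * θ⌋ = ⌊(n : ℝ) * θ⌋ + a ∨
      ⌊((n + T : ℕ) : ℝ) * θ⌋ = ⌊(n : ℝ) * θ⌋ + a + 1 := by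
    intro n
    have hxy : ((n + T : ℕ) : ℝ) * θ = (n : ℝ) * θ + (T : ℝ) * θ := by push_cast; ring
    have hlo : ⌊(n : ℝ) * θ⌋ + a ≤ ⌊((n + T : ℕ) : ℝ) * θ⌋ := by
      rw [hxy]
      refine Int.le_floor.mpr ?_
      push_cast
      have := Int.floor_le ((n : ℝ) * θ)
      have := Int.floor_le ((T : ℝ) * θ)
      linarith
    have hhi : ⌊((n + T : ℕ) : ℝ) * θ⌋ < ⌊(n : ℝ) * θ⌋ + a + 2 := by
      rw [hxy]
      refine Int.floor_lt.mpr ?_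
      push_cast
      have := Int.lt_floor_add_one ((n : ℝ) * θ)
      have := Int.lt_floor_add_one ((T : ℝ) * θ)
      linarith
    omega
  -- two multiples of k in {a, a+1} are equal
  have key : ∀ x y : ℤ, (k : ℤ) ∣ x → (k : ℤ) ∣ y →
      (x = a ∨ x = a + 1) → (y = a ∨ y = a + 1) → x = y := by
    intro x y hx hy hx' hy'
    rcases hx' with rfl | rfl <;> rcases hy' with rfl | rfl
    · rfl
    · exfalso
      have h1 : (k : ℤ) ∣ 1 := by have := dvd_sub hy hx; simpa using this
      have := Int.le_of_dvd one_pos h1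
      omega
    · exfalso
      have h1 : (k : ℤ) ∣ 1 := by have := dvd_sub hx hy; simpa using this
      have := Int.le_of_dvd one_pos h1
      omega
    · rfl
  -- constancy
  set c : ℤ := ⌊((M + T : ℕ) : ℝ) * θ⌋ - ⌊(M : ℝ) * θ⌋ with hc
  have hconst : ∀ n : ℕ, M ≤ n → ⌊((n + T : ℕ) : ℝ) * θ⌋ - ⌊(n : ℝ) * θ⌋ = c := by
    intro n hn
    rw [hc]
    exact key _ _ (hdiv n hn) (hdiv M le_rfl)
      (by rcases hrange n with h | h <;> omega)
      (by rcases hrange M with h | h <;> omega)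
  -- iterate
  have hiter : ∀ m : ℕ, ⌊((M + m * T : ℕ) : ℝ) * θ⌋ = ⌊(M : ℝ) * θ⌋ + m * c := by
    intro m
    induction m with
    | zero => simp
    | succ m ih =>
        have heq : (M + (m + 1) * T : ℕ) = ((M + m * T) + T : ℕ) := by ring
        have hstep := hconst (M + m * T) (by omega)
        rw [heq]
        push_cast at hstep ih ⊢
        linear_combination ih + hstep
  -- contradiction
  have hε : (T : ℝ) * θ - c ≠ 0 := by
    intro h
    apply hθ
    refine ⟨(c : ℚ) / (T : ℚ), ?_⟩
    have hT' : (T : ℝ) ≠ 0 := by positivity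
    push_cast
    field_simp
    linarith
  obtain ⟨m, hm⟩ := exists_nat_gt (1 / |(T : ℝ) * θ - c|)
  have hεpos : 0 < |(T : ℝ) * θ - c| := abs_pos.mpr hε
  have hgt : 1 < (m : ℝ) * |(T : ℝ) * θ - c| := by
    rw [div_lt_iff₀ hεpos] at hm
    linarith
  have h1 := hiter m
  have hfl := Int.floor_le (((M + m * T : ℕ) : ℝ) * θ)
  have hfu := Int.lt_floor_add_one (((M + m * T : ℕ) : ℝ) * θ)
  rw [h1] at hfl hfu
  have hfl2 := Int.floor_le ((M : ℝ) * θ)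
  have hfu2 := Int.lt_floor_add_one ((M : ℝ) * θ)
  push_cast at hfl hfu
  have hle : |(m : ℝ) * ((T : ℝ) * θ - c)| < 1 := by
    rw [abs_lt]
    constructor <;> nlinarith
  rw [abs_mul, abs_of_nonneg (by positivity : (0:ℝ) ≤ (m:ℝ))] at hle
  linarith
end

section
/- Let θ be an irrational number in (0,1) with continued fraction convergents p_n/q_n and partial quotients a_n, let k ≥ 2 be an integer, and suppose a_{n+1} ≥ k. Define d_m = 1 + (⌊mθ⌋ mod k) for m ≥ 1. Then d_{k q_n + r} = d_r for every integer r with 1 ≤ r ≤ q_n + q_{n-1} - 1. -/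
/-! With `ηₘ = qₘθ - pₘ` and `θₘ` the Gauss-map iterates, `η_{m+1} = -θ_{m+1} ηₘ`. Hence
`(s qₙ + r)θ = s pₙ + ⌊rθ⌋ + ({rθ} - s θₙ η_{n-1})`, and `⌊(s qₙ + r)θ⌋ = s pₙ + ⌊rθ⌋` says that
the last summand lies in `[0, 1)`. As `s θₙ ≤ a_{n+1} θₙ < 1`, this can only fail if `rθ - v` lies
strictly between `0` and `η_{n-1}` for `v = ⌊rθ⌋` or `v = ⌊rθ⌋ + 1`. Writing
`(r, v) = x (qₙ, pₙ) + y (q_{n-1}, p_{n-1})` in this unimodular basis turns that into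
`0 < y - x θₙ < 1`, which forces `x` and `y` to have the same sign, hence `r ≤ 0` or
`r ≥ qₙ + q_{n-1}`. -/

theorem le_zero_or_add_le_of_sub_mul_mem_Ioo {t : ℝ} (ht : 0 < t) {Q q x y : ℤ}
    (hQ : 0 ≤ Q) (hq : 0 ≤ q) (h : (y - x * t : ℝ) ∈ Set.Ioo 0 1) :
    x * Q + y * q ≤ 0 ∨ Q + q ≤ x * Q + y * q := by
  obtain ⟨h0, h1⟩ := h
  rcases le_or_gt y 0 with hy | hy
  · have hx : x < 0 := by
      have : (x : ℝ) * t < 0 := by linarith [(Int.cast_nonpos.2 hy : (y : ℝ) ≤ 0)]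
      exact_mod_cast neg_of_mul_neg_left this ht.le
    left; nlinarith
  · have hx : 0 < x := by
      have : (0 : ℝ) < x * t := by linarith [(by exact_mod_cast hy : (1 : ℝ) ≤ y)]
      exact_mod_cast pos_of_mul_pos_left this ht.le
    right; nlinarith

theorem sub_mul_mem_Ico_of_div_notMem_Ioo {F c f : ℝ} (hF : F ∈ Set.Ioo 0 1) (hc0 : 0 ≤ c)
    (hc1 : c < 1) (h0 : F / f ∉ Set.Ioo 0 1) (h1 : (F - 1) / f ∉ Set.Ioo 0 1) :
    F - c * f ∈ Set.Ico 0 1 := by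
  obtain ⟨hF0, hF1⟩ := hF
  rcases lt_trichotomy f 0 with hf | rfl | hf
  · have : 1 ≤ (F - 1) / f := not_lt.1 fun h => h1 ⟨div_pos_of_neg_of_neg (by linarith) hf, h⟩
    rw [le_div_iff_of_neg hf] at this
    constructor <;> nlinarith
  · simpa using ⟨hF0.le, hF1⟩
  · have : 1 ≤ F / f := not_lt.1 fun h => h0 ⟨div_pos hF0 hf, h⟩
    rw [le_div_iff₀ hf] at this
    constructor <;> nlinarith

noncomputable def cfEta (θ : ℝ) (m : ℕ) : ℝ := cfQ θ m * θ - cfP θ m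

section

variable {θ : ℝ}

theorem cfTheta_irrational (hθ : Irrational θ) : ∀ m, Irrational (cfTheta θ m)
  | 0 => hθ
  | m + 1 => by
    rw [cfTheta, Int.fract, one_div]
    exact (cfTheta_irrational hθ m).inv.sub_intCast _

theorem cfTheta_pos (hθ : Irrational θ) (hθ0 : 0 < θ) : ∀ m, 0 < cfTheta θ m
  | 0 => hθ0
  | m + 1 => by
    rw [cfTheta, one_div]
    exact Int.fract_pos.2 ((cfTheta_irrational hθ m).inv.ne_int _)

theorem cfA_succ_add_cfTheta_mul (hθ : Irrational θ) (m : ℕ) :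
    (cfA θ (m + 1) + cfTheta θ (m + 1)) * cfTheta θ m = 1 := by
  rw [cfA, cfTheta, Nat.add_sub_cancel, Int.floor_add_fract,
    one_div_mul_cancel (cfTheta_irrational hθ m).ne_zero]

theorem cfA_nonneg (hθ : Irrational θ) (hθ0 : 0 < θ) (m : ℕ) : 0 ≤ cfA θ m :=
  Int.floor_nonneg.2 (one_div_nonneg.2 (cfTheta_pos hθ hθ0 _).le)

theorem cfQ_nonneg (hθ : Irrational θ) (hθ0 : 0 < θ) : ∀ m, 0 ≤ cfQ θ m
  | 0 => zero_le_one
  | 1 => cfA_nonneg hθ hθ0 1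
  | m + 2 => add_nonneg
      (mul_nonneg (cfA_nonneg hθ hθ0 _) (cfQ_nonneg hθ hθ0 (m + 1))) (cfQ_nonneg hθ hθ0 m)

theorem cfEta_add_two (m : ℕ) :
    cfEta θ (m + 2) = cfA θ (m + 2) * cfEta θ (m + 1) + cfEta θ m := by
  simp only [cfEta, cfQ, cfP]
  push_cast
  ring

theorem cfEta_succ (hθ : Irrational θ) : ∀ m, cfEta θ (m + 1) = -cfTheta θ (m + 1) * cfEta θ m
  | 0 => by
    have h := cfA_succ_add_cfTheta_mul hθ 0
    simp only [cfEta, cfQ, cfP, cfTheta] at h ⊢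
    push_cast
    linear_combination h
  | m + 1 => by
    have h := cfA_succ_add_cfTheta_mul hθ (m + 1)
    rw [cfEta_add_two, cfEta_succ hθ m]
    linear_combination -cfEta θ m * h

theorem cfEta_ne_zero (hθ : Irrational θ) : ∀ m, cfEta θ m ≠ 0
  | 0 => by simpa [cfEta, cfQ, cfP] using hθ.ne_zero
  | m + 1 => by
    rw [cfEta_succ hθ]
    exact mul_ne_zero (neg_ne_zero.2 (cfTheta_irrational hθ _).ne_zero) (cfEta_ne_zero hθ m)

theorem cfP_succ_mul_cfQ_sub :
    ∀ m, cfP θ (m + 1) * cfQ θ m - cfP θ m * cfQ θ (m + 1) = (-1) ^ m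
  | 0 => by simp [cfP, cfQ]
  | m + 1 => by
    rw [cfP, cfQ, pow_succ]
    linear_combination -cfP_succ_mul_cfQ_sub m

theorem div_cfEta_notMem_Ioo (hθ : Irrational θ) (hθ0 : 0 < θ) {m : ℕ} {r : ℤ} (hr1 : 1 ≤ r)
    (hr2 : r ≤ cfQ θ (m + 1) + cfQ θ m - 1) (v : ℤ) :
    (r * θ - v) / cfEta θ m ∉ Set.Ioo 0 1 := by
  intro h
  set ε := cfP θ (m + 1) * cfQ θ m - cfP θ m * cfQ θ (m + 1) with hε_def
  have hε : ε * ε = 1 := by rw [hε_def, cfP_succ_mul_cfQ_sub, ← pow_add, ← two_mul, pow_mul]; simp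
  set x := ε * (cfQ θ m * v - cfP θ m * r)
  set y := ε * (cfP θ (m + 1) * r - cfQ θ (m + 1) * v)
  have hr : x * cfQ θ (m + 1) + y * cfQ θ m = r := by linear_combination r * hε
  have hv : x * cfP θ (m + 1) + y * cfP θ m = v := by linear_combination v * hε
  have hdiv : (r * θ - v) / cfEta θ m = y - x * cfTheta θ (m + 1) := by
    have hη := cfEta_succ hθ m
    rw [div_eq_iff (cfEta_ne_zero hθ m), ← hr, ← hv]
    simp only [cfEta] at hη ⊢
    push_cast
    linear_combination x * hη
  rw [hdiv] at h
  have := le_zero_or_add_le_of_sub_mul_mem_Ioo (cfTheta_pos hθ hθ0 (m + 1))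
    (cfQ_nonneg hθ hθ0 (m + 1)) (cfQ_nonneg hθ hθ0 m) h
  omega

theorem floor_mul_cfQ_add (hθ : Irrational θ) (hθ0 : 0 < θ) {m s : ℕ}
    (hs : (s : ℤ) ≤ cfA θ (m + 2)) {r : ℤ} (hr1 : 1 ≤ r) (hr2 : r ≤ cfQ θ (m + 1) + cfQ θ m - 1) :
    ⌊((s * cfQ θ (m + 1) + r : ℤ) : ℝ) * θ⌋ = s * cfP θ (m + 1) + ⌊(r : ℝ) * θ⌋ := by
  set F := Int.fract ((r : ℝ) * θ) with hF_def
  have hF : F ∈ Set.Ioo 0 1 :=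
    ⟨Int.fract_pos.2 ((hθ.intCast_mul (by omega)).ne_int _), Int.fract_lt_one _⟩
  have hst : s * cfTheta θ (m + 1) < 1 := by
    have h := cfA_succ_add_cfTheta_mul hθ (m + 1)
    have hpos₁ := cfTheta_pos hθ hθ0 (m + 1)
    have hpos₂ := cfTheta_pos hθ hθ0 (m + 2)
    have hs' : (s : ℝ) ≤ cfA θ (m + 2) := by exact_mod_cast hs
    nlinarith
  have hsplit : ((s * cfQ θ (m + 1) + r : ℤ) : ℝ) * θ =
      ((s * cfP θ (m + 1) + ⌊(r : ℝ) * θ⌋ : ℤ) : ℝ) + (F - s * cfTheta θ (m + 1) * cfEta θ m) := by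
    have hη := cfEta_succ hθ m
    simp only [cfEta] at hη ⊢
    rw [hF_def, Int.fract]
    push_cast
    linear_combination s * hη
  rw [hsplit, Int.floor_intCast_add, add_eq_left, Int.floor_eq_zero_iff]
  refine sub_mul_mem_Ico_of_div_notMem_Ioo hF
    (mul_nonneg s.cast_nonneg (cfTheta_pos hθ hθ0 _).le) hst
    (div_cfEta_notMem_Ioo hθ hθ0 hr1 hr2 ⌊(r : ℝ) * θ⌋) ?_
  convert div_cfEta_notMem_Ioo hθ hθ0 hr1 hr2 (⌊(r : ℝ) * θ⌋ + 1) using 3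
  rw [hF_def, Int.fract]
  push_cast
  ring

end

theorem davison_repetition_general (θ : ℝ) (hθ : Irrational θ) (hθ01 : θ ∈ Set.Ioo (0:ℝ) 1)
    (k : ℕ) (n : ℕ) (hn : 1 ≤ n) (ha : (k : ℤ) ≤ cfA θ (n + 1))
    (d : ℤ → ℤ) (hd : ∀ m : ℤ, 1 ≤ m → d m = 1 + ⌊(m : ℝ) * θ⌋ % (k : ℤ))
    (r : ℤ) (hr1 : 1 ≤ r) (hr2 : r ≤ cfQ θ n + cfQ θ (n - 1) - 1) :
    d ((k : ℤ) * cfQ θ n + r) = d r := by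
  obtain ⟨m, rfl⟩ : ∃ m, n = m + 1 := ⟨n - 1, by omega⟩
  have hkq := mul_nonneg (Int.natCast_nonneg k) (cfQ_nonneg hθ hθ01.1 (m + 1))
  rw [hd _ (by omega), hd r hr1, floor_mul_cfQ_add hθ hθ01.1 ha hr1 (by simpa using hr2),
    Int.mul_add_emod_self_left]

/-- Let `θ ∈ (0,1)` be irrational with partial quotients `aₙ` and convergents
`pₙ/qₙ`, let `k ≥ 2` with `a_{n+1} ≥ k`, and `d_m = 1 + (⌊mθ⌋ mod k)`.
Then `d_{k qₙ + r} = d_r` for every `1 ≤ r ≤ qₙ + q_{n-1} - 1`. -/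
theorem davison_repetition (θ : ℝ) (hθ : Irrational θ) (hθ01 : θ ∈ Set.Ioo (0:ℝ) 1)
    (k : ℕ) (hk : 2 ≤ k) (n : ℕ) (hn : 1 ≤ n) (ha : (k : ℤ) ≤ cfA θ (n + 1))
    (d : ℤ → ℤ) (hd : ∀ m : ℤ, 1 ≤ m → d m = 1 + ⌊(m : ℝ) * θ⌋ % (k : ℤ))
    (r : ℤ) (hr1 : 1 ≤ r) (hr2 : r ≤ cfQ θ n + cfQ θ (n - 1) - 1) :
    d ((k : ℤ) * cfQ θ n + r) = d r :=
  davison_repetition_general θ hθ hθ01 k n hn ha d hd r hr1 hr2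
end

section
/- Let A = [[a, 1], [1, 0]] and B = [[b, 1], [1, 0]] where a and b are distinct positive integers. Then ρ(AB) > (ρ(A)·ρ(B))^{0.885}, where ρ denotes the spectral radius. -/
/-!
For `x ≥ 0`, `ρ([[x,1],[1,0]]) = (x + √(x²+4))/2 ≤ x + 1/x`, and at `x = 1` it is the golden
ratio `< 1.6181`; `ρ(AB)`, the larger root of `λ² - (ab+2)λ + 1`, is at least `ab + 2 - 1/(ab+1)`.
As `0.885 = 177/200`, it suffices to compare the 177th power of the upper bound for `ρ(A)ρ(B)`
with the 200th power of the lower bound for `ρ(AB)`. Once `ab` is large, the first bound is at most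
`c · ρ(AB)` (`c = 1.6181` if `a = 1`, `c = 1.36` if `a ≥ 2`) and `c ^ 177 ≤ ρ(AB) ^ 23`.
The remaining pairs (`a = 1, b < 40`, and `(2, 3)`, `(2, 4)`) are checked numerically; the bounds
have to be that sharp because `log ρ(AB) / log (ρ(A)ρ(B))` drops to `0.88583` at `(a, b) = (1, 13)`.
-/

/-- The spectral radius of a real `2 × 2` matrix: the maximum of the absolute
values of its (complex) eigenvalues. -/
noncomputable def specRad (M : Matrix (Fin 2) (Fin 2) ℝ) : ℝ :=
  sSup ((fun z : ℂ => ‖z‖) '' spectrum ℂ (M.map (Complex.ofReal)))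

open Matrix

theorem Matrix.spectrum_fin_two_eq_pair {K : Type*} [Field K] {M : Matrix (Fin 2) (Fin 2) K}
    {r s : K} (htr : M.trace = r + s) (hdet : M.det = r * s) : spectrum K M = {r, s} := by
  ext μ
  have hfactor : μ ^ 2 - (r + s) * μ + r * s = (μ - r) * (μ - s) := by ring
  simp [mem_spectrum_iff_isRoot_charpoly, charpoly_fin_two, htr, hdet, hfactor, sub_eq_zero]

theorem specRad_nonneg (M : Matrix (Fin 2) (Fin 2) ℝ) : 0 ≤ specRad M :=
  Real.sSup_nonneg fun _ ⟨z, _, hz⟩ => hz ▸ norm_nonneg z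

theorem specRad_mul_comm (A B : Matrix (Fin 2) (Fin 2) ℝ) :
    specRad (A * B) = specRad (B * A) := by
  have hspec {C D : Matrix (Fin 2) (Fin 2) ℂ} : spectrum ℂ (C * D) = spectrum ℂ (D * C) := by
    ext μ
    simp only [mem_spectrum_iff_isRoot_charpoly, charpoly_mul_comm]
  have hmap (C D : Matrix (Fin 2) (Fin 2) ℝ) :
      (C * D).map Complex.ofReal = C.map Complex.ofReal * D.map Complex.ofReal :=
    Matrix.map_mul (f := Complex.ofRealHom)
  rw [specRad, specRad, hmap, hmap, hspec]

theorem specRad_eq_of_trace_det {M : Matrix (Fin 2) (Fin 2) ℝ} {r s : ℝ}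
    (htr : M.trace = r + s) (hdet : M.det = r * s) (hsr : |s| ≤ r) : specRad M = r := by
  have htrℂ : (M.map Complex.ofReal).trace = r + s := by
    simp only [trace_fin_two, map_apply] at htr ⊢; exact_mod_cast htr
  have hdetℂ : (M.map Complex.ofReal).det = r * s := by
    simp only [det_fin_two, map_apply] at hdet ⊢; exact_mod_cast hdet
  rw [specRad, spectrum_fin_two_eq_pair htrℂ hdetℂ, Set.image_pair, csSup_pair]
  simp only [Complex.norm_real, Real.norm_eq_abs, abs_of_nonneg ((abs_nonneg s).trans hsr)]
  exact sup_eq_left.2 hsr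

theorem specRad_companion {x : ℝ} (hx : 0 ≤ x) :
    specRad !![x, 1; 1, 0] = (x + √(x ^ 2 + 4)) / 2 := by
  have hsq := Real.sq_sqrt (show 0 ≤ x ^ 2 + 4 by positivity)
  have hxle : x ≤ √(x ^ 2 + 4) := Real.le_sqrt_of_sq_le (by linarith)
  apply specRad_eq_of_trace_det (s := (x - √(x ^ 2 + 4)) / 2)
  · rw [trace_fin_two_of]; ring
  · rw [det_fin_two_of]; linear_combination hsq / 4
  · rw [abs_le]; constructor <;> linarith

theorem specRad_companion_mul {x y : ℝ} (hx : 0 ≤ x) (hy : 0 ≤ y) :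
    specRad (!![x, 1; 1, 0] * !![y, 1; 1, 0]) = (x * y + 2 + √((x * y + 2) ^ 2 - 4)) / 2 := by
  have hxy := mul_nonneg hx hy
  have hsq := Real.sq_sqrt (show 0 ≤ (x * y + 2) ^ 2 - 4 by nlinarith)
  have hle : √((x * y + 2) ^ 2 - 4) ≤ x * y + 2 :=
    Real.sqrt_le_iff.2 ⟨by linarith, by linarith⟩
  rw [mul_fin_two]
  apply specRad_eq_of_trace_det (s := (x * y + 2 - √((x * y + 2) ^ 2 - 4)) / 2)
  · rw [trace_fin_two_of]; ring
  · rw [det_fin_two_of]; linear_combination hsq / 4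
  · rw [abs_le]; constructor <;> linarith [Real.sqrt_nonneg ((x * y + 2) ^ 2 - 4)]

theorem specRad_companion_one : specRad !![1, 1; 1, 0] = Real.goldenRatio := by
  rw [specRad_companion zero_le_one, Real.goldenRatio]; norm_num

theorem goldenRatio_lt : Real.goldenRatio < 1.6181 := by
  have : √5 < 2.2362 := by rw [Real.sqrt_lt' (by norm_num)]; norm_num
  rw [Real.goldenRatio]; linarith

theorem specRad_companion_le {x : ℝ} (hx : 0 < x) : specRad !![x, 1; 1, 0] ≤ x + x⁻¹ := by
  have h : √(x ^ 2 + 4) ≤ x + 2 * x⁻¹ := by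
    refine Real.sqrt_le_iff.2 ⟨by positivity, ?_⟩
    have : (x + 2 * x⁻¹) ^ 2 = x ^ 2 + 4 + 4 * x⁻¹ ^ 2 := by field_simp; ring
    nlinarith [sq_nonneg x⁻¹]
  rw [specRad_companion hx.le]
  linarith

theorem le_specRad_companion_mul {x y : ℝ} (hx : 0 ≤ x) (hy : 0 ≤ y) :
    x * y + 2 - (x * y + 1)⁻¹ ≤ specRad (!![x, 1; 1, 0] * !![y, 1; 1, 0]) := by
  have ht : 0 < x * y + 1 := by nlinarith [mul_nonneg hx hy]
  have h : x * y + 2 - 2 * (x * y + 1)⁻¹ ≤ √((x * y + 2) ^ 2 - 4) := by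
    apply Real.le_sqrt_of_sq_le
    have hinv : (x * y + 1) * (x * y + 1)⁻¹ = 1 := mul_inv_cancel₀ ht.ne'
    nlinarith [sq_nonneg (x * y + 1)⁻¹, inv_pos.2 ht, mul_nonneg hx hy]
  rw [specRad_companion_mul hx hy]
  linarith

theorem pow_lt_pow_add_of_lt_mul {P R c : ℝ} {m n : ℕ} (hP : 0 ≤ P) (hR : 0 ≤ R)
    (h : P < c * R) (hc : c ^ m ≤ R ^ n) (hm : m ≠ 0) : P ^ m < R ^ (m + n) :=
  calc P ^ m < (c * R) ^ m := pow_lt_pow_left₀ h hP hm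
    _ = c ^ m * R ^ m := mul_pow c R m
    _ ≤ R ^ n * R ^ m := mul_le_mul_of_nonneg_right hc (pow_nonneg hR m)
    _ = R ^ (m + n) := by rw [← pow_add, add_comm]

theorem rpow_div_lt_of_pow_lt {P R : ℝ} {m n : ℕ} (hP : 0 ≤ P) (hR : 0 ≤ R) (hn : n ≠ 0)
    (h : P ^ m < R ^ n) : P ^ ((m : ℝ) / n) < R :=
  calc P ^ ((m : ℝ) / n) = (P ^ m) ^ ((n : ℝ)⁻¹) := by
        rw [div_eq_mul_inv, Real.rpow_mul hP, Real.rpow_natCast]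
    _ < (R ^ n) ^ ((n : ℝ)⁻¹) := by gcongr
    _ = R := Real.pow_rpow_inv_natCast hR hn

theorem golden_mul_add_inv_pow_lt_of_forty_le {y : ℝ} (hy : 40 ≤ y) :
    (1.6181 * (y + y⁻¹)) ^ 177 < (y + 2 - (y + 1)⁻¹) ^ 200 := by
  have hinv : y⁻¹ + (y + 1)⁻¹ < 2 := by
    have : y⁻¹ ≤ 1 := inv_le_one_of_one_le₀ (by linarith)
    have : (y + 1)⁻¹ < 1 := inv_lt_one_of_one_lt₀ (by linarith)
    linarith
  have hR : 41.5 ≤ y + 2 - (y + 1)⁻¹ := by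
    have : (y + 1)⁻¹ ≤ 1 / 2 := by rw [inv_le_comm₀ (by linarith) (by norm_num)]; linarith
    linarith
  refine pow_lt_pow_add_of_lt_mul (c := 1.6181) (m := 177) (n := 23) (by positivity)
    (by linarith) ?_ ?_ (by norm_num)
  · nlinarith
  · calc (1.6181 : ℝ) ^ 177 ≤ 41.5 ^ 23 := by norm_num
      _ ≤ _ := pow_le_pow_left₀ (by norm_num) hR 23

theorem golden_mul_add_inv_pow_lt (n : ℕ) (hn : 2 ≤ n) :
    (1.6181 * (n + (n : ℝ)⁻¹)) ^ 177 < ((n : ℝ) + 2 - ((n : ℝ) + 1)⁻¹) ^ 200 := by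
  rcases lt_or_ge n 40 with h | h
  · interval_cases n <;> norm_num
  · exact golden_mul_add_inv_pow_lt_of_forty_le (by exact_mod_cast h)

theorem add_inv_mul_add_inv_pow_lt {x y : ℝ} (hx : 2 ≤ x) (hxy : x ≤ y) (h10 : 10 ≤ x * y) :
    ((x + x⁻¹) * (y + y⁻¹)) ^ 177 < (x * y + 2 - (x * y + 1)⁻¹) ^ 200 := by
  have hy : 2 ≤ y := hx.trans hxy
  have hinv : (x * y + 1)⁻¹ ≤ 1 / 2 := by
    rw [inv_le_comm₀ (by linarith) (by norm_num)]; linarith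
  have hP : (x + x⁻¹) * (y + y⁻¹) ≤ 1.25 * (x * y) + 1.1 := by
    have h1 : x * y⁻¹ ≤ 1 := by
      rw [← div_eq_mul_inv]; exact div_le_one_of_le₀ hxy (by linarith)
    have h2 : x⁻¹ * y ≤ x * y / 4 := by
      have : x⁻¹ ≤ x / 4 := by rw [inv_le_iff_one_le_mul₀ (by linarith)]; nlinarith
      nlinarith
    have h3 : x⁻¹ * y⁻¹ ≤ 1 / 10 := by
      rw [← mul_inv]; exact inv_le_of_inv_le₀ (by norm_num) (by norm_num; linarith)
    nlinarith
  refine pow_lt_pow_add_of_lt_mul (c := 1.36) (m := 177) (n := 23) (by positivity)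
    (by linarith) (by linarith) ?_ (by norm_num)
  calc (1.36 : ℝ) ^ 177 ≤ 11.5 ^ 23 := by norm_num
    _ ≤ _ := pow_le_pow_left₀ (by norm_num) (by linarith) 23

theorem add_inv_mul_add_inv_pow_lt_nat (a b : ℕ) (ha : 2 ≤ a) (hab : a < b) :
    (((a : ℝ) + (a : ℝ)⁻¹) * ((b : ℝ) + (b : ℝ)⁻¹)) ^ 177
      < ((a : ℝ) * b + 2 - ((a : ℝ) * b + 1)⁻¹) ^ 200 := by
  rcases lt_or_ge (a * b) 10 with h | h
  · obtain rfl : a = 2 := by nlinarith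
    have : b < 5 := by omega
    interval_cases b <;> norm_num
  · exact add_inv_mul_add_inv_pow_lt (by exact_mod_cast ha) (by exact_mod_cast hab.le)
      (by exact_mod_cast h)

theorem specRad_companion_mul_pow_lt (a b : ℕ) (ha : 0 < a) (hab : a < b) :
    (specRad !![(a : ℝ), 1; 1, 0] * specRad !![(b : ℝ), 1; 1, 0]) ^ 177
      < specRad (!![(a : ℝ), 1; 1, 0] * !![(b : ℝ), 1; 1, 0]) ^ 200 := by
  have hx : (0 : ℝ) < a := by exact_mod_cast ha
  have hy : (0 : ℝ) < b := by exact_mod_cast ha.trans hab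
  have hL0 : 0 ≤ (a : ℝ) * b + 2 - ((a : ℝ) * b + 1)⁻¹ := by
    have := inv_le_one_of_one_le₀ (show 1 ≤ (a : ℝ) * b + 1 by nlinarith)
    nlinarith
  obtain ⟨U, hPU, hU⟩ : ∃ U, specRad !![(a : ℝ), 1; 1, 0] * specRad !![(b : ℝ), 1; 1, 0] ≤ U ∧
      U ^ 177 < ((a : ℝ) * b + 2 - ((a : ℝ) * b + 1)⁻¹) ^ 200 := by
    rcases (show a = 1 ∨ 2 ≤ a by omega) with rfl | ha2
    · refine ⟨1.6181 * (b + (b : ℝ)⁻¹), ?_, by simpa using golden_mul_add_inv_pow_lt b (by omega)⟩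
      rw [Nat.cast_one, specRad_companion_one]
      exact mul_le_mul goldenRatio_lt.le (specRad_companion_le hy) (specRad_nonneg _)
        (by norm_num)
    · exact ⟨_, mul_le_mul (specRad_companion_le hx) (specRad_companion_le hy)
        (specRad_nonneg _) (by positivity), add_inv_mul_add_inv_pow_lt_nat a b ha2 hab⟩
  calc _ ≤ U ^ 177 := pow_le_pow_left₀ (mul_nonneg (specRad_nonneg _) (specRad_nonneg _)) hPU 177
    _ < _ := hU
    _ ≤ _ := pow_le_pow_left₀ hL0 (le_specRad_companion_mul hx.le hy.le) 200

/-- If `A = [[a,1],[1,0]]` and `B = [[b,1],[1,0]]` with `a ≠ b` positive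
integers, then `ρ(AB) > (ρ(A) ρ(B))^0.885`. -/
theorem specRad_mul_gt (a b : ℕ) (ha : 0 < a) (hb : 0 < b) (hab : a ≠ b) :
    specRad (!![(a : ℝ), 1; 1, 0] * !![(b : ℝ), 1; 1, 0]) >
      (specRad !![(a : ℝ), 1; 1, 0] * specRad !![(b : ℝ), 1; 1, 0]) ^ (0.885 : ℝ) := by
  rw [show (0.885 : ℝ) = (177 : ℕ) / (200 : ℕ) by norm_num]
  refine rpow_div_lt_of_pow_lt (mul_nonneg (specRad_nonneg _) (specRad_nonneg _))
    (specRad_nonneg _) (by norm_num) ?_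
  rcases hab.lt_or_gt with h | h
  · exact specRad_companion_mul_pow_lt a b ha h
  · rw [mul_comm (specRad _), specRad_mul_comm]
    exact specRad_companion_mul_pow_lt b a hb h
end
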